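/- Let 0 < r0 < R ≤ ∞ and let φ1, φ2 : (r0,R) → [0,∞) satisfy limsup_{r→R⁻} φ1(r) = k1 and limsup_{r→R⁻} φ2(r) = k2 with 0 ≤ k1 < k2 ≤ ∞. Suppose there exists ψ ∈ D(r0,R) such that φ2(r)ψ(r) is non-decreasing on (r0,R). Then the set G = {r ∈ (r0,R) : φ1(r) < φ2(r)} has upper ψ-density at least 1 − k1/k2 (interpreted as 1 when k2 = ∞) and upper e^ψ-density equal to 1. -/

import Mathlib

open MeasureTheory Filter Set

/-- The filter of real numbers tending to `R` from below (equals `atTop` when `R = ⊤`). -/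
noncomputable def densFilter (R : EReal) : Filter ℝ :=
  Filter.comap (fun x : ℝ => (x : EReal)) (nhdsWithin R (Set.Iio R))

/-- The interval `(r0, R)` as a set of reals. -/
def psiDomain (r0 : ℝ) (R : EReal) : Set ℝ := {r : ℝ | r0 < r ∧ (r : EReal) < R}

/-- Barry's class `𝒟(r0,R)`: positive, unbounded, differentiable, strictly increasing
functions on `(r0, R)`. -/
structure PsiClass (r0 : ℝ) (R : EReal) (ψ : ℝ → ℝ) : Prop where
  pos : ∀ r ∈ psiDomain r0 R, 0 < ψ r
  unbounded : Filter.Tendsto ψ (densFilter R) Filter.atTop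
  differentiable : ∀ r ∈ psiDomain r0 R, DifferentiableAt ℝ ψ r
  strictMono : StrictMonoOn ψ (psiDomain r0 R)

/-- The upper `ψ`-density of a set `E ⊆ (r0, R)`:
`limsup_{r→R⁻} (1/ψ(r)) ∫_{E∩[r0,r)} ψ'(t) dt`. -/
noncomputable def upperPsiDens (r0 : ℝ) (R : EReal) (ψ : ℝ → ℝ) (E : Set ℝ) : ℝ :=
  Filter.limsup (fun r => (∫ t in E ∩ Set.Ico r0 r, deriv ψ t) / ψ r) (densFilter R)

/-- The lower `ψ`-density of a set `E ⊆ (r0, R)`. -/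
noncomputable def lowerPsiDens (r0 : ℝ) (R : EReal) (ψ : ℝ → ℝ) (E : Set ℝ) : ℝ :=
  Filter.liminf (fun r => (∫ t in E ∩ Set.Ico r0 r, deriv ψ t) / ψ r) (densFilter R)

variable {r0 : ℝ} {R : EReal}

lemma densBasis (hr0R : (r0 : EReal) < R) :
    (densFilter R).HasBasis (fun a : EReal => a < R)
      (fun a => {x : ℝ | a < (x : EReal) ∧ (x : EReal) < R}) := by
  have h := (nhdsLT_basis_of_exists_lt ⟨(r0 : EReal), hr0R⟩).comap (fun x : ℝ => (x : EReal))
  convert h using 2 <;> rfl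

lemma exists_real_btwn (hr0R : (r0 : EReal) < R) {a : EReal} (ha : a < R) :
    ∃ x : ℝ, r0 < x ∧ a < (x : EReal) ∧ (x : EReal) < R := by
  obtain ⟨z, hz1, hz2⟩ := exists_between (max_lt ha hr0R)
  induction z with
  | bot => exact absurd hz1 (by simp)
  | top => exact absurd hz2 (by simp [lt_irrefl, le_top.not_gt, lt_top_iff_ne_top] )
  | coe x =>
    refine ⟨x, ?_, lt_of_le_of_lt (le_max_left a r0) hz1 |>.trans_le le_rfl |> fun h => ?_, hz2⟩
    · exact_mod_cast lt_of_le_of_lt (le_max_right a r0) hz1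
    · exact h
    
lemma densFilter_neBot (hr0R : (r0 : EReal) < R) : (densFilter R).NeBot := by
  rw [(densBasis hr0R).neBot_iff]
  intro a ha
  obtain ⟨x, _, h1, h2⟩ := exists_real_btwn hr0R ha
  exact ⟨x, h1, h2⟩

lemma eventually_domain (hr0R : (r0 : EReal) < R) :
    ∀ᶠ x in densFilter R, x ∈ psiDomain r0 R := by
  refine (densBasis hr0R).eventually_iff.2 ⟨(r0 : EReal), hr0R, fun x hx => ?_⟩
  exact ⟨by exact_mod_cast hx.1, hx.2⟩

lemma isOpen_domain : IsOpen (psiDomain r0 R) := by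
  have : psiDomain r0 R = Ioi r0 ∩ ((fun x : ℝ => (x : EReal)) ⁻¹' Iio R) := rfl
  rw [this]
  exact isOpen_Ioi.inter (isOpen_Iio.preimage continuous_coe_real_ereal)

lemma domain_ordConnected : OrdConnected (psiDomain r0 R) := by
  constructor
  rintro x ⟨hx1, hx2⟩ y ⟨hy1, hy2⟩ z ⟨hz1, hz2⟩
  exact ⟨hx1.trans_le hz1, lt_of_le_of_lt (by exact_mod_cast hz2) hy2⟩

lemma mem_domain_of_btwn {x y z : ℝ} (hx : x ∈ psiDomain r0 R) (hy : y ∈ psiDomain r0 R)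
    (h1 : x ≤ z) (h2 : z ≤ y) : z ∈ psiDomain r0 R :=
  domain_ordConnected.out hx hy ⟨h1, h2⟩

variable {ψ : ℝ → ℝ}

lemma PsiClass.continuousOn (hψ : PsiClass r0 R ψ) : ContinuousOn ψ (psiDomain r0 R) :=
  fun x hx => (hψ.differentiable x hx).continuousAt.continuousWithinAt

lemma PsiClass.deriv_nonneg (hψ : PsiClass r0 R ψ) {x : ℝ} (hx : x ∈ psiDomain r0 R) :
    0 ≤ deriv ψ x := by
  have hd := (hψ.differentiable x hx).hasDerivAt
  have hs := hasDerivAt_iff_tendsto_slope.1 hd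
  have hs' : Tendsto (slope ψ x) (nhdsWithin x (Ioi x)) (nhds (deriv ψ x)) :=
    hs.mono_left (nhdsWithin_mono x (fun y hy => ne_of_gt hy))
  refine ge_of_tendsto hs' ?_
  have hmem : ∀ᶠ y in nhdsWithin x (Ioi x), y ∈ psiDomain r0 R :=
    eventually_nhdsWithin_of_eventually_nhds (isOpen_domain.eventually_mem hx)
  filter_upwards [hmem, self_mem_nhdsWithin] with y hy hxy
  rw [slope_def_field]
  have := hψ.strictMono.monotoneOn hx hy (le_of_lt hxy)
  exact div_nonneg (by linarith) (by linarith [mem_Ioi.1 hxy])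

lemma EReal.coe_le_of_le {x y : ℝ} (h : x ≤ y) : (x : EReal) ≤ (y : EReal) := by exact_mod_cast h

lemma PsiClass.aux (hψ : PsiClass r0 R ψ) {b b' : ℝ} (hb : r0 < b) (hbb' : b < b')
    (hb' : b' ∈ psiDomain r0 R) :
    IntegrableOn (deriv ψ) (Ioo r0 b) volume ∧ ∫ t in Ioo r0 b, deriv ψ t ≤ ψ b' := by
  have hb'R := hb'.2
  have hr0b' : r0 < b' := hb.trans hbb'
  have hmemIcc : ∀ t : ℝ, t ≤ b' → r0 < t → t ∈ psiDomain r0 R := fun t ht h0 =>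
    ⟨h0, lt_of_le_of_lt (show (t:EReal) ≤ (b':EReal) by exact_mod_cast ht) hb'R⟩
  have hsub : Ioo r0 b ⊆ psiDomain r0 R := fun t ht =>
    hmemIcc t (ht.2.le.trans hbb'.le) ht.1
  have hψpos := hψ.pos
  have hψmono := hψ.strictMono.monotoneOn
  set h : ℕ → ℝ := fun n => (b' - b) / (n + 1) with hh
  have hpos : ∀ n, 0 < h n := fun n => div_pos (by linarith) (by positivity)
  have hle : ∀ n, h n ≤ b' - b := fun n => by
    rw [hh]
    apply div_le_self (by linarith)
    simp only [le_add_iff_nonneg_left]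
    positivity
  have htend0 : Tendsto h atTop (nhds 0) := by
    have := tendsto_one_div_add_atTop_nhds_zero_nat.const_mul (b' - b)
    simpa [hh, div_eq_mul_inv, mul_comm] using this
  have hshift : ∀ n, ∀ t ∈ Ioo r0 b, t + h n ∈ psiDomain r0 R := fun n t ht =>
    hmemIcc _ (by nlinarith [hle n, ht.2]) (lt_trans ht.1 (lt_add_of_pos_right t (hpos n)))
  set g : ℕ → ℝ → ℝ := fun n t => (ψ (t + h n) - ψ t) / h n with hg
  have hconv : ∀ t ∈ Ioo r0 b, Tendsto (fun n => g n t) atTop (nhds (deriv ψ t)) := by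
    intro t ht
    have hd := (hψ.differentiable t (hsub ht)).hasDerivAt
    have hs := hasDerivAt_iff_tendsto_slope.1 hd
    have hseq : Tendsto (fun n => t + h n) atTop (nhdsWithin t {t}ᶜ) := by
      rw [tendsto_nhdsWithin_iff]
      constructor
      · simpa using (tendsto_const_nhds (x := t) (f := atTop)).add htend0
      · exact Eventually.of_forall fun n => by
          simp only [mem_compl_iff, mem_singleton_iff]
          nlinarith [hpos n]
    have hcomp := hs.comp hseq
    convert hcomp using 2 with n
    rw [hg]
    simp only [Function.comp_apply, slope_def_field]
    rw [div_eq_div_iff (hpos n).ne' (by nlinarith [hpos n])]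
    ring
  have hcont : ∀ n, ContinuousOn (g n) (Ioo r0 b) := by
    intro n
    apply ContinuousOn.div_const
    apply ContinuousOn.sub
    · exact hψ.continuousOn.comp (continuous_add_right (h n)).continuousOn
        (fun t ht => hshift n t ht)
    · exact hψ.continuousOn.mono hsub
  have haesm : ∀ n, AEStronglyMeasurable (g n) (volume.restrict (Ioo r0 b)) := fun n =>
    (hcont n).aestronglyMeasurable measurableSet_Ioo
  have haesmD : AEStronglyMeasurable (deriv ψ) (volume.restrict (Ioo r0 b)) := by
    refine aestronglyMeasurable_of_tendsto_ae atTop haesm ?_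
    exact (ae_restrict_iff' measurableSet_Ioo).2 (ae_of_all _ hconv)
  have hgnn : ∀ n, ∀ t ∈ Ioo r0 b, 0 ≤ g n t := fun n t ht =>
    div_nonneg (by
      have := hψmono (hsub ht) (hshift n t ht) (le_of_lt (lt_add_of_pos_right t (hpos n)))
      linarith) (hpos n).le
  have hgbd : ∀ n, ∀ t ∈ Ioo r0 b, g n t ≤ ψ b' / h n := fun n t ht => by
    have h1 : ψ (t + h n) ≤ ψ b' := hψmono (hshift n t ht) hb' (by nlinarith [hle n, ht.2])
    have h2 : 0 < ψ t := hψpos t (hsub ht)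
    rw [hg]
    exact div_le_div_of_nonneg_right (by linarith) (hpos n).le
  -- integrability of ψ on subintervals of (r0, b']
  have hIocdom : Ioc r0 b' ⊆ psiDomain r0 R := fun t ht => hmemIcc t ht.2 ht.1
  have hψIoc : IntegrableOn ψ (Ioc r0 b') volume := by
    refine Integrable.mono' (integrable_const (ψ b')) ?_ ?_
    · exact (hψ.continuousOn.mono hIocdom).aestronglyMeasurable measurableSet_Ioc
    · refine (ae_restrict_iff' measurableSet_Ioc).2 (ae_of_all _ fun t ht => ?_)
      rw [Real.norm_of_nonneg (hψpos t (hIocdom ht)).le]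
      exact hψmono (hIocdom ht) hb' ht.2
  have hIψ : ∀ x y : ℝ, x ∈ Icc r0 b' → y ∈ Icc r0 b' → IntervalIntegrable ψ volume x y := by
    intro x y hx hy
    rw [intervalIntegrable_iff]
    exact hψIoc.mono_set fun t ht =>
      ⟨lt_of_le_of_lt (le_min hx.1 hy.1) ht.1, ht.2.trans (max_le hx.2 hy.2)⟩
  have hgint : ∀ n, IntegrableOn (g n) (Ioo r0 b) volume := by
    intro n
    refine Integrable.mono' (integrable_const (ψ b' / h n)) (haesm n) ?_
    refine (ae_restrict_iff' measurableSet_Ioo).2 (ae_of_all _ fun t ht => ?_)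
    rw [Real.norm_of_nonneg (hgnn n t ht)]
    exact hgbd n t ht
  have hints : ∀ n, ∫ t in Ioo r0 b, g n t ≤ ψ b' := by
    intro n
    have hbb : b + h n ≤ b' := by nlinarith [hle n]
    have hra : r0 + h n ≤ b' := by nlinarith [hle n, hpos n]
    have I1 : IntervalIntegrable ψ volume r0 (r0 + h n) :=
      hIψ _ _ ⟨le_refl r0, hr0b'.le⟩ ⟨by nlinarith [hpos n], hra⟩
    have I2 : IntervalIntegrable ψ volume (r0 + h n) (b + h n) :=
      hIψ _ _ ⟨by nlinarith [hpos n], hra⟩ ⟨by nlinarith [hpos n], hbb⟩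
    have I3 : IntervalIntegrable ψ volume r0 b := hIψ _ _ ⟨le_refl r0, hr0b'.le⟩ ⟨hb.le, hbb'.le⟩
    have I4 : IntervalIntegrable ψ volume b (b + h n) :=
      hIψ _ _ ⟨hb.le, hbb'.le⟩ ⟨by nlinarith [hpos n], hbb⟩
    have hIg : IntervalIntegrable (fun t => ψ (t + h n)) volume r0 b := by
      have := (hIψ (r0 + h n) (b + h n) ⟨by nlinarith [hpos n], hra⟩
        ⟨by nlinarith [hpos n], hbb⟩).comp_add_right (h n)
      simpa using this
    have e0 : ∫ t in Ioo r0 b, g n t = ∫ t in r0..b, g n t := by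
      rw [intervalIntegral.integral_of_le hb.le, integral_Ioc_eq_integral_Ioo]
    have e1 : ∫ t in r0..b, g n t
        = ((∫ t in r0..b, ψ (t + h n)) - ∫ t in r0..b, ψ t) / h n := by
      rw [hg]
      rw [← intervalIntegral.integral_sub hIg I3, ← intervalIntegral.integral_div]
    have e2 : ∫ t in r0..b, ψ (t + h n) = ∫ t in (r0 + h n)..(b + h n), ψ t :=
      intervalIntegral.integral_comp_add_right ψ (h n)
    have hadd1 : (∫ t in r0..(r0 + h n), ψ t) + ∫ t in (r0 + h n)..(b + h n), ψ t
        = ∫ t in r0..(b + h n), ψ t := intervalIntegral.integral_add_adjacent_intervals I1 I2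
    have hadd2 : (∫ t in r0..b, ψ t) + ∫ t in b..(b + h n), ψ t
        = ∫ t in r0..(b + h n), ψ t := intervalIntegral.integral_add_adjacent_intervals I3 I4
    have hA : 0 ≤ ∫ t in r0..(r0 + h n), ψ t := by
      rw [intervalIntegral.integral_of_le (by nlinarith [hpos n])]
      refine setIntegral_nonneg measurableSet_Ioc fun t ht => ?_
      exact (hψpos t (hmemIcc t (ht.2.trans hra) ht.1)).le
    have hB : ∫ t in b..(b + h n), ψ t ≤ h n * ψ b' := by
      have := intervalIntegral.integral_mono_on (by nlinarith [hpos n] : b ≤ b + h n) I4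
        intervalIntegrable_const (fun t ht => hψmono (hmemIcc t (ht.2.trans hbb) (hb.trans_le ht.1))
          hb' (ht.2.trans hbb))
      simpa [smul_eq_mul, add_sub_cancel_left] using this
    rw [e0, e1, e2]
    rw [div_le_iff₀ (hpos n)]
    nlinarith [hA, hB, hadd1, hadd2]
  have hdnn : 0 ≤ᵐ[volume.restrict (Ioo r0 b)] deriv ψ :=
    (ae_restrict_iff' measurableSet_Ioo).2 (ae_of_all _ fun t ht => hψ.deriv_nonneg (hsub ht))
  have hFat : ∫⁻ t in Ioo r0 b, ENNReal.ofReal (deriv ψ t) ≤ ENNReal.ofReal (ψ b') := by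
    have hmeas : ∀ n, AEMeasurable (fun t => ENNReal.ofReal (g n t))
        (volume.restrict (Ioo r0 b)) := fun n =>
      ENNReal.measurable_ofReal.comp_aemeasurable (haesm n).aemeasurable
    have hbdn : ∀ n, ∫⁻ t in Ioo r0 b, ENNReal.ofReal (g n t) ≤ ENNReal.ofReal (ψ b') := by
      intro n
      rw [← ofReal_integral_eq_lintegral_ofReal (hgint n)
        ((ae_restrict_iff' measurableSet_Ioo).2 (ae_of_all _ (hgnn n)))]
      exact ENNReal.ofReal_le_ofReal (hints n)
    calc ∫⁻ t in Ioo r0 b, ENNReal.ofReal (deriv ψ t)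
        = ∫⁻ t in Ioo r0 b, liminf (fun n => ENNReal.ofReal (g n t)) atTop := by
          refine lintegral_congr_ae ((ae_restrict_iff' measurableSet_Ioo).2
            (ae_of_all _ fun t ht => ?_))
          exact ((ENNReal.continuous_ofReal.tendsto _).comp (hconv t ht)).liminf_eq.symm
      _ ≤ liminf (fun n => ∫⁻ t in Ioo r0 b, ENNReal.ofReal (g n t)) atTop :=
          lintegral_liminf_le' hmeas
      _ ≤ liminf (fun _ : ℕ => ENNReal.ofReal (ψ b')) atTop :=
          liminf_le_liminf (Eventually.of_forall hbdn)
      _ = ENNReal.ofReal (ψ b') := liminf_const _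
  have hint : IntegrableOn (deriv ψ) (Ioo r0 b) volume :=
    ⟨haesmD, (hasFiniteIntegral_iff_ofReal hdnn).2 (lt_of_le_of_lt hFat ENNReal.ofReal_lt_top)⟩
  refine ⟨hint, ?_⟩
  rw [integral_eq_lintegral_of_nonneg_ae hdnn haesmD]
  exact ENNReal.toReal_le_of_le_ofReal (hψpos b' hb').le hFat

lemma PsiClass.integrableOn_deriv (hψ : PsiClass r0 R ψ) {b : ℝ} (hb : b ∈ psiDomain r0 R) :
    IntegrableOn (deriv ψ) (Ioo r0 b) volume := by
  obtain ⟨x, hx1, hx2, hx3⟩ := exists_real_btwn hb.2 (show (b : EReal) < R from hb.2)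
  exact (hψ.aux hb.1 hx1 ⟨hb.1.trans hx1, hx3⟩).1

lemma PsiClass.setIntegral_deriv_le (hψ : PsiClass r0 R ψ) {b : ℝ} (hb : b ∈ psiDomain r0 R) :
    ∫ t in Ioo r0 b, deriv ψ t ≤ ψ b := by
  have htend : Tendsto ψ (nhdsWithin b (Ioi b)) (nhds (ψ b)) :=
    ((hψ.differentiable b hb).continuousAt.tendsto).mono_left nhdsWithin_le_nhds
  refine ge_of_tendsto htend ?_
  filter_upwards [eventually_nhdsWithin_of_eventually_nhds (isOpen_domain.eventually_mem hb),
    self_mem_nhdsWithin] with b' hb' hgt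
  exact (hψ.aux hb.1 hgt hb').2

lemma PsiClass.integral_Ioo_deriv (hψ : PsiClass r0 R ψ) {r s : ℝ} (hr : r ∈ psiDomain r0 R)
    (hs : s ∈ psiDomain r0 R) (hrs : r ≤ s) :
    ∫ t in Ioo r s, deriv ψ t = ψ s - ψ r := by
  have hII : IntervalIntegrable (deriv ψ) volume r s := by
    rw [intervalIntegrable_iff_integrableOn_Ioc_of_le hrs]
    obtain ⟨x, hx1, hx2, hx3⟩ := exists_real_btwn hs.2 (show (s : EReal) < R from hs.2)
    exact (hψ.integrableOn_deriv ⟨hs.1.trans hx1, hx3⟩).mono_set fun t ht =>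
      ⟨hr.1.trans ht.1, lt_of_le_of_lt ht.2 hx1⟩
  have := intervalIntegral.integral_eq_sub_of_hasDerivAt (f := ψ) (f' := deriv ψ)
    (fun x hx => (hψ.differentiable x (mem_domain_of_btwn hr hs
      (by rw [uIcc_of_le hrs] at hx; exact hx.1) (by rw [uIcc_of_le hrs] at hx; exact hx.2))).hasDerivAt)
    hII
  rw [← integral_Ioc_eq_integral_Ioo, ← intervalIntegral.integral_of_le hrs, this]

lemma dens_sub_Ioo {E : Set ℝ} (hE : E ⊆ psiDomain r0 R) {s : ℝ} :
    E ∩ Ico r0 s ⊆ Ioo r0 s := fun t ht => ⟨(hE ht.1).1, ht.2.2⟩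

lemma PsiClass.dens_ae_nonneg (hψ : PsiClass r0 R ψ) {E : Set ℝ} (hE : E ⊆ psiDomain r0 R)
    {s : ℝ} (hs : s ∈ psiDomain r0 R) :
    0 ≤ᵐ[volume.restrict (E ∩ Ico r0 s)] deriv ψ := by
  have hae : 0 ≤ᵐ[volume.restrict (Ioo r0 s)] deriv ψ :=
    (ae_restrict_iff' measurableSet_Ioo).2 (ae_of_all _ fun t ht =>
      hψ.deriv_nonneg ⟨ht.1, lt_trans (show (t:EReal) < (s:EReal)
        by exact_mod_cast ht.2) hs.2⟩)
  exact hae.filter_mono (ae_mono (Measure.restrict_mono (dens_sub_Ioo hE) le_rfl))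

lemma PsiClass.dens_nonneg (hψ : PsiClass r0 R ψ) {E : Set ℝ} (hE : E ⊆ psiDomain r0 R)
    {s : ℝ} (hs : s ∈ psiDomain r0 R) :
    0 ≤ (∫ t in E ∩ Ico r0 s, deriv ψ t) / ψ s :=
  div_nonneg (integral_nonneg_of_ae (hψ.dens_ae_nonneg hE hs)) (hψ.pos s hs).le

lemma PsiClass.dens_le_one (hψ : PsiClass r0 R ψ) {E : Set ℝ} (hE : E ⊆ psiDomain r0 R)
    {s : ℝ} (hs : s ∈ psiDomain r0 R) :
    (∫ t in E ∩ Ico r0 s, deriv ψ t) / ψ s ≤ 1 := by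
  rw [div_le_one (hψ.pos s hs)]
  refine le_trans (setIntegral_mono_set (hψ.integrableOn_deriv hs) ?_
    (HasSubset.Subset.eventuallyLE (dens_sub_Ioo hE))) (hψ.setIntegral_deriv_le hs)
  exact (ae_restrict_iff' measurableSet_Ioo).2 (ae_of_all _ fun t ht =>
    hψ.deriv_nonneg ⟨ht.1, lt_of_le_of_lt (show (t:EReal) ≤ (s:EReal)
      by exact_mod_cast ht.2.le) hs.2⟩)

lemma PsiClass.dens_lower (hψ : PsiClass r0 R ψ) {E : Set ℝ} (hE : E ⊆ psiDomain r0 R)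
    {r s : ℝ} (hr : r ∈ psiDomain r0 R) (hs : s ∈ psiDomain r0 R) (hrs : r ≤ s)
    (hIoo : Ioo r s ⊆ E) :
    1 - ψ r / ψ s ≤ (∫ t in E ∩ Ico r0 s, deriv ψ t) / ψ s := by
  have hspos := hψ.pos s hs
  have h1 : ∫ t in Ioo r s, deriv ψ t ≤ ∫ t in E ∩ Ico r0 s, deriv ψ t := by
    refine setIntegral_mono_set ((hψ.integrableOn_deriv hs).mono_set (dens_sub_Ioo hE))
      (hψ.dens_ae_nonneg hE hs) (HasSubset.Subset.eventuallyLE fun t ht =>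
        ⟨hIoo ht, hr.1.le.trans ht.1.le, ht.2⟩)
  have h2 := hψ.integral_Ioo_deriv hr hs hrs
  have heq : 1 - ψ r / ψ s = (ψ s - ψ r) / ψ s := by field_simp
  rw [heq]
  apply div_le_div_of_nonneg_right _ hspos.le
  linarith [h1, h2]

lemma PsiClass.freq_step (hψ : PsiClass r0 R ψ) {E : Set ℝ} (hE : E ⊆ psiDomain r0 R)
    {r y : ℝ} (hr : r ∈ psiDomain r0 R) (hy : ψ r < y)
    (hF : ∀ t ∈ psiDomain r0 R, r < t → ψ t ≤ y → t ∈ E) :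
    ∃ s ∈ psiDomain r0 R, r < s ∧ ψ s = y ∧
      1 - ψ r / y ≤ (∫ t in E ∩ Ico r0 s, deriv ψ t) / ψ s := by
  -- find u beyond r with ψ u ≥ y
  obtain ⟨a, ha, hab⟩ := (densBasis (lt_trans (show (r0:EReal) < (r:EReal) by exact_mod_cast hr.1)
    hr.2)).eventually_iff.1 (hψ.unbounded.eventually (eventually_ge_atTop y))
  obtain ⟨u, hu1, hu2, hu3⟩ := exists_real_btwn (r0 := r) hr.2 (max_lt ha hr.2)
  have hu2' : a < (u : EReal) := lt_of_le_of_lt (le_max_left _ _) hu2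
  have hudom : u ∈ psiDomain r0 R := ⟨hr.1.trans hu1, hu3⟩
  have hψu : y ≤ ψ u := hab ⟨hu2', hu3⟩
  -- IVT
  have hcont : ContinuousOn ψ (Icc r u) := hψ.continuousOn.mono fun t ht =>
    mem_domain_of_btwn hr hudom ht.1 ht.2
  have hy' : y ∈ Icc (ψ r) (ψ u) := ⟨hy.le, hψu⟩
  obtain ⟨s, hsmem, hψs⟩ := intermediate_value_Icc hu1.le hcont hy'
  have hsdom : s ∈ psiDomain r0 R := mem_domain_of_btwn hr hudom hsmem.1 hsmem.2
  have hrs : r < s := by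
    rcases eq_or_lt_of_le hsmem.1 with h | h
    · exact absurd (h ▸ hψs) hy.ne
    · exact h
  have hIoo : Ioo r s ⊆ E := fun t ht => by
    have htdom : t ∈ psiDomain r0 R := mem_domain_of_btwn hr hsdom ht.1.le ht.2.le
    exact hF t htdom ht.1 (hψs ▸ (hψ.strictMono htdom hsdom ht.2).le)
  exact ⟨s, hsdom, hrs, hψs, by
    rw [← hψs]
    exact hψ.dens_lower hE hr hsdom hrs.le hIoo⟩


lemma PsiClass.limsup_dens_le_one (hψ : PsiClass r0 R ψ) (hr0R : (r0 : EReal) < R)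
    {E : Set ℝ} (hE : E ⊆ psiDomain r0 R) : upperPsiDens r0 R ψ E ≤ 1 := by
  haveI := densFilter_neBot hr0R
  refine limsup_le_of_le ?_ ((eventually_domain hr0R).mono fun s hs => hψ.dens_le_one hE hs)
  exact IsBoundedUnder.isCoboundedUnder_le
    ⟨0, eventually_map.2 ((eventually_domain hr0R).mono fun s hs => hψ.dens_nonneg hE hs)⟩

lemma PsiClass.limsup_dens_ge (hψ : PsiClass r0 R ψ) (hr0R : (r0 : EReal) < R)
    {E : Set ℝ} (hE : E ⊆ psiDomain r0 R) {c : ℝ}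
    (hfreq : ∃ᶠ s in densFilter R, c ≤ (∫ t in E ∩ Ico r0 s, deriv ψ t) / ψ s) :
    c ≤ upperPsiDens r0 R ψ E := by
  haveI := densFilter_neBot hr0R
  exact le_limsup_of_frequently_le hfreq
    (isBoundedUnder_of_eventually_le ((eventually_domain hr0R).mono
      fun s hs => hψ.dens_le_one hE hs))

lemma exists_good_r (hr0R : (r0 : EReal) < R) {φ2 : ℝ → ℝ} {k2 : EReal}
    (h2 : Filter.limsup (fun r => ((φ2 r : ℝ) : EReal)) (densFilter R) = k2)
    {K : ℝ} (hK2 : (K : EReal) < k2) {p : ℝ → Prop} (hp : ∀ᶠ x in densFilter R, p x)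
    {a : EReal} (ha : a < R) :
    ∃ r ∈ psiDomain r0 R, a < (r : EReal) ∧ K < φ2 r ∧ p r := by
  have hfreq : ∃ᶠ x in densFilter R, (K : EReal) < ((φ2 x : ℝ) : EReal) := by
    refine frequently_lt_of_lt_limsup (by isBoundedDefault) (by rw [h2]; exact hK2)
  obtain ⟨r, hr1, hr2⟩ := ((densBasis hr0R).frequently_iff.1 (hfreq.and_eventually hp))
    (a ⊔ (r0 : EReal)) (max_lt ha hr0R)
  refine ⟨r, ⟨?_, hr1.2⟩, lt_of_le_of_lt (le_max_left _ _) hr1.1, ?_, hr2.2⟩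
  · exact_mod_cast lt_of_le_of_lt (le_max_right a (r0 : EReal)) hr1.1
  · exact_mod_cast hr2.1


theorem statement8 (r0 : ℝ) (R : EReal) (hr0 : 0 < r0) (hr0R : (r0 : EReal) < R)
    (φ1 φ2 : ℝ → ℝ)
    (hφ1 : ∀ r ∈ psiDomain r0 R, 0 ≤ φ1 r) (hφ2 : ∀ r ∈ psiDomain r0 R, 0 ≤ φ2 r)
    (k1 : ℝ) (k2 : EReal) (hk10 : 0 ≤ k1) (hk12 : (k1 : EReal) < k2)
    (h1 : Filter.limsup (fun r => ((φ1 r : ℝ) : EReal)) (densFilter R) = (k1 : EReal))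
    (h2 : Filter.limsup (fun r => ((φ2 r : ℝ) : EReal)) (densFilter R) = k2)
    (ψ : ℝ → ℝ) (hψ : PsiClass r0 R ψ)
    (hmono : MonotoneOn (fun r => φ2 r * ψ r) (psiDomain r0 R)) :
    (if k2 = ⊤ then (1 : ℝ) else 1 - k1 / k2.toReal) ≤
      upperPsiDens r0 R ψ {r | r ∈ psiDomain r0 R ∧ φ1 r < φ2 r} ∧
    upperPsiDens r0 R (fun t => Real.exp (ψ t)) {r | r ∈ psiDomain r0 R ∧ φ1 r < φ2 r} = 1 := by
  classical
  set E : Set ℝ := {r | r ∈ psiDomain r0 R ∧ φ1 r < φ2 r} with hEdef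
  have hE : E ⊆ psiDomain r0 R := fun x hx => hx.1
  haveI := densFilter_neBot hr0R
  have hφ1ev : ∀ ε : ℝ, 0 < ε → ∀ᶠ x in densFilter R, φ1 x < k1 + ε := by
    intro ε hε
    have hlt : Filter.limsup (fun r => ((φ1 r : ℝ) : EReal)) (densFilter R)
        < ((k1 + ε : ℝ) : EReal) := by
      rw [h1]; exact_mod_cast lt_add_of_pos_right k1 hε
    exact (eventually_lt_of_limsup_lt hlt).mono fun x hx => by exact_mod_cast hx
  have hgoodr : ∀ ε K : ℝ, 0 < ε → k1 + ε < K → (K : EReal) < k2 →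
      ∀ p : ℝ → Prop, (∀ᶠ x in densFilter R, p x) → ∀ a : EReal, a < R →
      ∃ r ∈ psiDomain r0 R, a < (r : EReal) ∧ K < φ2 r ∧ p r ∧
        (∀ t ∈ psiDomain r0 R, r < t → ψ t ≤ K / (k1 + ε) * ψ r → t ∈ E) := by
    intro ε K hε hKgt hK2 p hp a ha
    obtain ⟨w, hwR, hwall⟩ := (densBasis hr0R).eventually_iff.1 (hφ1ev ε hε)
    obtain ⟨r, hrdom, hra, hrφ2, hpr⟩ := exists_good_r hr0R h2 hK2 hp
      (max_lt ha hwR : a ⊔ w < R)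
    refine ⟨r, hrdom, lt_of_le_of_lt (le_max_left a w) hra, hrφ2, hpr, ?_⟩
    intro t htdom hrt hty
    by_contra hne
    have hle : φ2 t ≤ φ1 t := not_lt.1 fun hlt => hne ⟨htdom, hlt⟩
    have hφ1t : φ1 t < k1 + ε := hwall
      ⟨lt_trans (lt_of_le_of_lt (le_max_right a w) hra) (by exact_mod_cast hrt), htdom.2⟩
    have hm : φ2 r * ψ r ≤ φ2 t * ψ t := hmono hrdom htdom hrt.le
    have hψr := hψ.pos r hrdom
    have hψt := hψ.pos t htdom
    have h5 : (k1 + ε) * (K / (k1 + ε) * ψ r) = K * ψ r := by field_simp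
    nlinarith [mul_lt_mul_of_pos_right hrφ2 hψr,
      mul_lt_mul_of_pos_right (lt_of_le_of_lt hle hφ1t) hψt,
      mul_le_mul_of_nonneg_left hty (by linarith : (0:ℝ) ≤ k1 + ε)]
  have main1 : ∀ ε K : ℝ, 0 < ε → k1 + ε < K → (K : EReal) < k2 →
      1 - (k1 + ε) / K ≤ upperPsiDens r0 R ψ E := by
    intro ε K hε hKgt hK2
    refine hψ.limsup_dens_ge hr0R hE ?_
    rw [(densBasis hr0R).frequently_iff]
    intro a ha
    obtain ⟨r, hrdom, hra, hrφ2, -, hF⟩ := hgoodr ε K hε hKgt hK2 (fun _ => True)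
      (Eventually.of_forall fun _ => trivial) a ha
    have hψr := hψ.pos r hrdom
    have hc1 : 1 < K / (k1 + ε) := (one_lt_div (by linarith)).2 hKgt
    have hy : ψ r < K / (k1 + ε) * ψ r := (lt_mul_iff_one_lt_left hψr).2 hc1
    obtain ⟨s, hsdom, hrs, hψsy, hbound⟩ := hψ.freq_step hE hrdom hy hF
    refine ⟨s, ⟨lt_trans hra (by exact_mod_cast hrs), hsdom.2⟩, ?_⟩
    have hK0 : (0:ℝ) < K := by linarith
    have heq : ψ r / (K / (k1 + ε) * ψ r) = (k1 + ε) / K := by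
      have hne1 : ψ r ≠ 0 := hψr.ne'
      have hne2 : K ≠ 0 := hK0.ne'
      have hne3 : k1 + ε ≠ 0 := by positivity
      field_simp
    calc 1 - (k1 + ε) / K = 1 - ψ r / (K / (k1 + ε) * ψ r) := by rw [heq]
      _ ≤ _ := hbound
  constructor
  · rcases eq_or_ne k2 ⊤ with htop | htop
    · rw [if_pos htop]
      refine le_of_forall_pos_le_add fun δ hδ => ?_
      set K := max ((k1 + 1) / δ + 1) (k1 + 2) with hKdef
      have h1K : k1 + 1 < K := lt_of_lt_of_le (by linarith) (le_max_right _ _)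
      have hKb : (k1 + 1) / δ ≤ K := le_trans (by linarith) (le_max_left _ _)
      have hK2 : (K : EReal) < k2 := htop ▸ EReal.coe_lt_top K
      have hm := main1 1 K one_pos h1K hK2
      have hdiv : (k1 + 1) / K ≤ δ := by
        rw [div_le_iff₀ (by linarith : (0:ℝ) < K)]
        calc k1 + 1 = ((k1 + 1) / δ) * δ := (div_mul_cancel₀ _ hδ.ne').symm
          _ ≤ K * δ := mul_le_mul_of_nonneg_right hKb hδ.le
          _ = δ * K := mul_comm K δ
      linarith
    · rw [if_neg htop]
      have hk2bot : k2 ≠ ⊥ := ne_bot_of_gt hk12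
      have hk2eq : ((k2.toReal : ℝ) : EReal) = k2 := EReal.coe_toReal htop hk2bot
      have hk1K2 : k1 < k2.toReal := by
        rw [← EReal.coe_lt_coe_iff, hk2eq]; exact hk12
      set K2 := k2.toReal with hK2def
      have hK2pos : 0 < K2 := lt_of_le_of_lt hk10 hk1K2
      refine le_of_forall_pos_le_add fun δ hδ => ?_
      have hcont : Tendsto (fun t : ℝ => (k1 + t) / (K2 - t)) (nhds 0) (nhds (k1 / K2)) := by
        have hf : ContinuousAt (fun t : ℝ => k1 + t) 0 := continuousAt_const.add continuousAt_id
        have hg : ContinuousAt (fun t : ℝ => K2 - t) 0 := continuousAt_const.sub continuousAt_id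
        have h := hf.div hg (show (fun t : ℝ => K2 - t) 0 ≠ 0 by simpa using hK2pos.ne')
        have h' := h.tendsto
        simp only [Pi.div_apply, add_zero, sub_zero] at h'
        exact h'
      have hev1 := hcont.eventually_lt_const (lt_add_of_pos_right _ hδ)
      have hev2 : ∀ᶠ t : ℝ in nhds 0, t < (K2 - k1) / 2 :=
        tendsto_id.eventually_lt_const (by linarith : (0:ℝ) < (K2 - k1) / 2)
      have hmemIoi : ∀ᶠ x : ℝ in nhdsWithin 0 (Ioi 0), x ∈ Ioi (0:ℝ) := eventually_mem_nhdsWithin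
      obtain ⟨t, ht1, ht0⟩ :=
        (((hev1.and hev2).filter_mono (nhdsWithin_le_nhds (s := Ioi (0:ℝ)))).and hmemIoi).exists
      have ht0' : 0 < t := ht0
      have hKgt : k1 + t < K2 - t := by linarith [ht1.2]
      have hK2' : ((K2 - t : ℝ) : EReal) < k2 := by
        rw [← hk2eq]; exact_mod_cast (by linarith : K2 - t < K2)
      have hm := main1 t (K2 - t) ht0' hKgt hK2'
      linarith [ht1.1]
  · have hψe : PsiClass r0 R (fun t => Real.exp (ψ t)) :=
      { pos := fun r _ => Real.exp_pos _
        unbounded := Real.tendsto_exp_atTop.comp hψ.unbounded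
        differentiable := fun r hr => (hψ.differentiable r hr).exp
        strictMono := fun x hx y hy hxy => Real.exp_lt_exp.2 (hψ.strictMono hx hy hxy) }
    refine le_antisymm (hψe.limsup_dens_le_one hr0R hE) ?_
    refine le_of_forall_pos_le_add fun δ hδ => ?_
    obtain ⟨K, hK1, -, hK2⟩ := exists_real_btwn (r0 := k1) hk12 hk12
    set ε := (K - k1) / 2 with hεdef
    have hε : 0 < ε := by simp only [hεdef]; linarith
    have hKgt : k1 + ε < K := by simp only [hεdef]; linarith
    have hc1 : 1 < K / (k1 + ε) := (one_lt_div (by linarith)).2 hKgt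
    set c := K / (k1 + ε) with hcdef
    set M := Real.log (1 / δ) / (c - 1) with hMdef
    have hpM : ∀ᶠ x in densFilter R, M ≤ ψ x := hψ.unbounded.eventually (eventually_ge_atTop M)
    have hlow : 1 - δ ≤ upperPsiDens r0 R (fun u => Real.exp (ψ u)) E := by
      refine hψe.limsup_dens_ge hr0R hE ?_
      rw [(densBasis hr0R).frequently_iff]
      intro a ha
      obtain ⟨r, hrdom, hra, hrφ2, hMr, hF⟩ := hgoodr ε K hε hKgt hK2 (fun x => M ≤ ψ x) hpM a ha
      have hψr := hψ.pos r hrdom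
      have hy : Real.exp (ψ r) < Real.exp (c * ψ r) :=
        Real.exp_lt_exp.2 ((lt_mul_iff_one_lt_left hψr).2 hc1)
      have hF' : ∀ u ∈ psiDomain r0 R, r < u → Real.exp (ψ u) ≤ Real.exp (c * ψ r) → u ∈ E :=
        fun u hu hru hle => hF u hu hru (by
          have := Real.exp_le_exp.1 hle
          simpa [hcdef] using this)
      obtain ⟨s, hsdom, hrs, hψsy, hbound⟩ := hψe.freq_step hE hrdom hy hF'
      refine ⟨s, ⟨lt_trans hra (by exact_mod_cast hrs), hsdom.2⟩, le_trans ?_ hbound⟩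
      have hquot : Real.exp (ψ r) / Real.exp (c * ψ r) ≤ δ := by
        rw [← Real.exp_sub]
        have h1 : ψ r - c * ψ r = -((c - 1) * ψ r) := by ring
        rw [h1, Real.exp_neg]
        have h2 : Real.log (1 / δ) ≤ (c - 1) * ψ r := by
          have hmul := mul_le_mul_of_nonneg_left hMr (by linarith : (0:ℝ) ≤ c - 1)
          calc Real.log (1 / δ) = (c - 1) * M := by
                rw [hMdef, mul_div_cancel₀ _ (show c - 1 ≠ 0 by linarith)]
            _ ≤ (c - 1) * ψ r := hmul
        have h3 : 1 / δ ≤ Real.exp ((c - 1) * ψ r) :=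
          le_trans (le_of_eq (Real.exp_log (by positivity)).symm) (Real.exp_le_exp.2 h2)
        rw [inv_le_comm₀ (Real.exp_pos _) hδ]
        rwa [one_div] at h3
      linarith
    linarith
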